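/- arXiv:1705.00719 — 12 statements merged into one kernel-verified Lean document; each statement's English description precedes it below -/
import Mathlib

section
/- Any quasitrivial operation F : X^n → X has at most one isolated point. -/
/-- `F` is quasitrivial: it always outputs one of its arguments. -/
def Quasitrivial {X : Type*} {n : ℕ} (F : (Fin n → X) → X) : Prop :=
  ∀ x : Fin n → X, ∃ i, F x = x i

/-- `F` is symmetric: invariant under permutation of its arguments. -/
def Symm {X : Type*} {n : ℕ} (F : (Fin n → X) → X) : Prop :=
  ∀ (x : Fin n → X) (σ : Equiv.Perm (Fin n)), F (x ∘ σ) = F x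

/-- `F` is nondecreasing in each argument. -/
def Nondecr {X : Type*} [LinearOrder X] {n : ℕ} (F : (Fin n → X) → X) : Prop :=
  ∀ x y : Fin n → X, (∀ i, x i ≤ y i) → F x ≤ F y

/-- `x` is an isolated point for `F`. -/
def Isolated {X : Type*} {n : ℕ} (F : (Fin n → X) → X) (x : Fin n → X) : Prop :=
  ∀ y : Fin n → X, F y = F x → y = x

/-- `e` is a neutral element of the `n`-ary operation `F`. -/
def Neutral {X : Type*} {n : ℕ} (F : (Fin n → X) → X) (e : X) : Prop :=
  ∀ (i : Fin n) (x : X), F (Function.update (fun _ => e) i x) = x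

/-- `n`-ary associativity: substituting `F` over the block of `n` consecutive
arguments starting at position `i` (0-based) of a `(2n-1)`-tuple gives the same
result as substituting over the block starting at position `i+1`. -/
def NAssoc {X : Type*} (n : ℕ) (F : (Fin n → X) → X) : Prop :=
  ∀ (x : ℕ → X) (i : ℕ), i + 2 ≤ n →
    F (fun j : Fin n => if (j : ℕ) < i then x j
        else if (j : ℕ) = i then F (fun k : Fin n => x (i + k)) else x (j + n - 1))
    = F (fun j : Fin n => if (j : ℕ) < i + 1 then x j
        else if (j : ℕ) = i + 1 then F (fun k : Fin n => x (i + 1 + k)) else x (j + n - 1))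

/-- `F` is bisymmetric. -/
def Bisymm {X : Type*} {n : ℕ} (F : (Fin n → X) → X) : Prop :=
  ∀ M : Fin n → Fin n → X,
    F (fun i => F (M i)) = F (fun j => F (fun i => M i j))

/-- `F` is ultrabisymmetric: the value `F (F ∘ rows)` is unchanged when two
entries of the matrix are exchanged. -/
def UltraBisymm {X : Type*} {n : ℕ} (F : (Fin n → X) → X) : Prop :=
  ∀ (M : Fin n → Fin n → X) (p q : Fin n × Fin n),
    F (fun i => F (M i)) =
    F (fun i => F (fun j =>
      if (i, j) = p then M q.1 q.2 else if (i, j) = q then M p.1 p.2 else M i j))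

/-- Iterated left composition `x 0 ∘ x 1 ∘ ⋯ ∘ x k` for a binary operation. -/
def iterComp {X : Type*} (H : X → X → X) (x : ℕ → X) : ℕ → X
  | 0 => x 0
  | k + 1 => H (iterComp H x k) (x (k + 1))

/-- The `n`-ary operation `F` is derived from the binary operation `H`. -/
def DerivedFrom {X : Type*} {n : ℕ} (F : (Fin n → X) → X) (H : X → X → X) : Prop :=
  ∀ x : ℕ → X, F (fun i : Fin n => x i) = iterComp H x (n - 1)

namespace Quasitrivial

variable {X : Type*} {n : ℕ} {F : (Fin n → X) → X}

theorem apply_const (hq : Quasitrivial F) (a : X) : F (fun _ => a) = a := by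
  obtain ⟨i, hi⟩ := hq fun _ => a
  exact hi

theorem isolated_apply (hq : Quasitrivial F) {z : Fin n → X} (hz : Isolated F z) (j : Fin n) :
    z j = F z := by
  obtain ⟨i, hi⟩ := hq z
  rw [hi, ← hz _ ((hq.apply_const (z i)).trans hi.symm)]

/-- The tuple `(F x, F y, …, F y)` is sent to one of its entries, and isolation of `x` or
of `y` then forces it to be constant. -/
theorem apply_eq_of_isolated [Nontrivial (Fin n)] (hq : Quasitrivial F) {x y : Fin n → X}
    (hx : Isolated F x) (hy : Isolated F y) : F x = F y := by
  obtain ⟨i, j, hij⟩ := exists_pair_ne (Fin n)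
  set w := Function.update (fun _ => F y) i (F x)
  have hwi : w i = F x := Function.update_self ..
  have hwj : w j = F y := Function.update_of_ne hij.symm ..
  have hFw : F w = F x ∨ F w = F y := by
    obtain ⟨k, hk⟩ := hq w
    rw [hk]
    by_cases hki : k = i
    · exact Or.inl (hki ▸ hwi)
    · exact Or.inr (Function.update_of_ne hki ..)
  rcases hFw with hFw | hFw
  · rw [← hq.isolated_apply hx j, ← hx w hFw, hwj]
  · rw [← hq.isolated_apply hy i, ← hy w hFw, hwi]

end Quasitrivial

theorem stmt_1 {X : Type*} {n : ℕ} (hn : 2 ≤ n) (F : (Fin n → X) → X)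
    (hq : Quasitrivial F) (x y : Fin n → X)
    (hx : Isolated F x) (hy : Isolated F y) : x = y := by
  have : Nontrivial (Fin n) := Fin.nontrivial_iff_two_le.mpr hn
  exact hy x (hq.apply_eq_of_isolated hx hy)
end

section
/- Let F : X^n → X be quasitrivial and let e ∈ X. If the point (e,...,e) (e repeated n times) is isolated for F, then e is a neutral element of F. -/
theorem Quasitrivial.apply_const_s2 {X : Type*} {n : ℕ} {F : (Fin n → X) → X}
    (hq : Quasitrivial F) (e : X) : F (fun _ => e) = e :=
  let ⟨_, h⟩ := hq fun _ => e; h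

theorem Quasitrivial.apply_update_const {X : Type*} {n : ℕ} {F : (Fin n → X) → X}
    (hq : Quasitrivial F) (e : X) (i : Fin n) (x : X) :
    F (Function.update (fun _ => e) i x) = x ∨ F (Function.update (fun _ => e) i x) = e := by
  obtain ⟨j, hj⟩ := hq (Function.update (fun _ => e) i x)
  rcases eq_or_ne j i with rfl | hji
  · exact .inl (by simpa using hj)
  · exact .inr (by simpa [Function.update_of_ne hji] using hj)

theorem stmt_2_general {X : Type*} {n : ℕ} (F : (Fin n → X) → X)
    (hq : Quasitrivial F) (e : X)
    (he : Isolated F (fun _ => e)) : Neutral F e := by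
  intro i x
  rcases hq.apply_update_const e i x with hx | hFe
  · exact hx
  · have hconst := he _ (hFe.trans (hq.apply_const_s2 e).symm)
    have hxe : x = e := by simpa using congrFun hconst i
    rw [hFe, hxe]

theorem stmt_2 {X : Type*} {n : ℕ} (hn : 2 ≤ n) (F : (Fin n → X) → X)
    (hq : Quasitrivial F) (e : X)
    (he : Isolated F (fun _ => e)) : Neutral F e :=
  stmt_2_general F hq e he
end

section
/- Let X be a linearly ordered set. If G : X² → X is quasitrivial, symmetric, and nondecreasing in each argument, then G is associative. -/
/-! For `x ≤ y ≤ z`, monotonicity forces `G x z` to absorb `y`. Hence in every finite set the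
value of `G` on its least and greatest elements absorbs all of them, and both bracketings of `G`
on a triple evaluate to it. -/

section QuasitrivialSymmetric

variable {X : Type*} [LinearOrder X] {G : X → X → X}

theorem apply_apply_eq_of_le_of_le (hq : ∀ x y, G x y = x ∨ G x y = y)
    (hs : ∀ x y, G x y = G y x) (hm : ∀ x x' y y', x ≤ x' → y ≤ y' → G x y ≤ G x' y')
    {x y z : X} (hxy : x ≤ y) (hyz : y ≤ z) : G (G x z) y = G x z := by
  rcases hq x z with hx | hz
  · have hle : G x y ≤ G x z := hm x x y z le_rfl hyz
    rw [hx] at hle ⊢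
    rcases hq x y with h | h <;> rw [h] at hle ⊢
    exact le_antisymm hle hxy
  · have hge : G x z ≤ G y z := hm x y z z hxy le_rfl
    rw [hz] at hge ⊢
    rw [hs]
    rcases hq y z with h | h <;> rw [h] at hge ⊢
    exact le_antisymm hyz hge

theorem Finset.exists_absorbing (hq : ∀ x y, G x y = x ∨ G x y = y)
    (hs : ∀ x y, G x y = G y x) (hm : ∀ x x' y y', x ≤ x' → y ≤ y' → G x y ≤ G x' y')
    (s : Finset X) (hne : s.Nonempty) : ∃ w ∈ s, ∀ t ∈ s, G w t = w := by
  refine ⟨G (s.min' hne) (s.max' hne), ?_, fun t ht => ?_⟩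
  · rcases hq (s.min' hne) (s.max' hne) with h | h <;> rw [h]
    exacts [s.min'_mem hne, s.max'_mem hne]
  · exact apply_apply_eq_of_le_of_le hq hs hm (s.min'_le t ht) (s.le_max' t ht)

end QuasitrivialSymmetric

theorem stmt_4 {X : Type*} [LinearOrder X] (G : X → X → X)
    (hq : ∀ x y, G x y = x ∨ G x y = y)
    (hs : ∀ x y, G x y = G y x)
    (hm : ∀ x x' y y', x ≤ x' → y ≤ y' → G x y ≤ G x' y') :
    ∀ x y z, G (G x y) z = G x (G y z) := by
  intro x y z
  obtain ⟨w, hw, habs⟩ := Finset.exists_absorbing hq hs hm {x, y, z} (by simp)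
  simp only [Finset.mem_insert, Finset.mem_singleton, forall_eq_or_imp, forall_eq] at hw habs
  rcases hw with rfl | rfl | rfl <;> grind
end

section
/- Let X be a linearly ordered set, n ≥ 3, and let F : X^n → X be quasitrivial, symmetric, and nondecreasing. If F(x,...,x,y) = F(x,y,...,y) for all x,y ∈ X (with n−1 copies of the repeated element), then there exists a quasitrivial nondecreasing operation G : X² → X such that F(x_1,...,x_n) = G(min_i x_i, max_i x_i) for all x_1,...,x_n ∈ X. -/
/-!
Let `G a b` be the value of `F` on the tuple with one `a` and all other entries `b`. By symmetry
the position of the lone entry does not matter, and the hypothesis on `F` says that one `a` among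
`b`s and one `b` among `a`s give the same value. If `x` has minimum `a` and maximum `b`, then
monotonicity squeezes `F x` between the tuple with one `b` (at a position of the maximum) among
`a`s and the tuple with one `a` (at a position of the minimum) among `b`s, both of value `G a b`.
-/

open Function Finset

section

variable {X : Type*} {n : ℕ} {F : (Fin n → X) → X}

theorem Symm.apply_update_const_eq (hs : Symm F) (b a : X) (j k : Fin n) :
    F (update (fun _ => b) j a) = F (update (fun _ => b) k a) := by
  rw [← hs _ (Equiv.swap j k), update_comp_equiv, Equiv.symm_swap, Equiv.swap_apply_left]
  rfl

variable [LinearOrder X]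

theorem Nondecr.le_apply_update_const (hm : Nondecr F) {x : Fin n → X} {b : X}
    (hb : ∀ i, x i ≤ b) (j : Fin n) : F x ≤ F (update (fun _ => b) j (x j)) :=
  hm _ _ fun i => by
    rcases eq_or_ne i j with rfl | hij
    · simp
    · simpa [update_of_ne hij] using hb i

theorem Nondecr.apply_update_const_le (hm : Nondecr F) {x : Fin n → X} {a : X}
    (ha : ∀ i, a ≤ x i) (k : Fin n) : F (update (fun _ => a) k (x k)) ≤ F x :=
  hm _ _ fun i => by
    rcases eq_or_ne i k with rfl | hik
    · simp
    · simpa [update_of_ne hik] using ha i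

theorem apply_eq_apply_update_inf'_sup' (hs : Symm F) (hm : Nondecr F) (j k : Fin n)
    (hbal : ∀ a b : X, F (update (fun _ => b) j a) = F (update (fun _ => a) k b))
    (hne : (univ : Finset (Fin n)).Nonempty) (x : Fin n → X) :
    F x = F (update (fun _ => univ.sup' hne x) j (univ.inf' hne x)) := by
  obtain ⟨jmin, -, hjmin⟩ := exists_mem_eq_inf' hne x
  obtain ⟨kmax, -, hkmax⟩ := exists_mem_eq_sup' hne x
  apply le_antisymm
  · calc F x ≤ F (update (fun _ => univ.sup' hne x) jmin (x jmin)) :=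
          hm.le_apply_update_const (fun i => le_sup' x (mem_univ i)) jmin
      _ = _ := by rw [← hjmin, hs.apply_update_const_eq]
  · calc F (update (fun _ => univ.sup' hne x) j (univ.inf' hne x))
          = F (update (fun _ => univ.inf' hne x) kmax (x kmax)) := by
            rw [hbal, hkmax, hs.apply_update_const_eq]
      _ ≤ F x := hm.apply_update_const_le (fun i => inf'_le x (mem_univ i)) kmax

end

theorem stmt_6 {X : Type*} [LinearOrder X] {n : ℕ} (hn : 3 ≤ n)
    (F : (Fin n → X) → X) (hq : Quasitrivial F) (hs : Symm F) (hm : Nondecr F)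
    (h2 : ∀ x y : X,
      F (fun i => if (i : ℕ) < n - 1 then x else y)
        = F (fun i => if (i : ℕ) = 0 then x else y)) :
    ∃ G : X → X → X,
      (∀ x y, G x y = x ∨ G x y = y) ∧
      (∀ x x' y y', x ≤ x' → y ≤ y' → G x y ≤ G x' y') ∧
      ∀ x : Fin n → X,
        F x = G (Finset.univ.inf' (Finset.univ_nonempty_iff.mpr ⟨⟨0, by omega⟩⟩) x)
                (Finset.univ.sup' (Finset.univ_nonempty_iff.mpr ⟨⟨0, by omega⟩⟩) x) := by
  let zero : Fin n := ⟨0, by omega⟩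
  let last : Fin n := ⟨n - 1, by omega⟩
  have hbal : ∀ a b : X, F (update (fun _ => b) zero a) = F (update (fun _ => a) last b) := by
    intro a b
    convert (h2 a b).symm using 2 <;> ext i <;> simp only [update_apply, zero, last, Fin.ext_iff]
    have := i.isLt
    split_ifs <;> first | rfl | omega
  refine ⟨fun a b => F (update (fun _ => b) zero a), fun a b => ?_, fun a a' b b' ha hb => ?_,
    apply_eq_apply_update_inf'_sup' hs hm zero last hbal _⟩
  · obtain ⟨i, hi⟩ := hq (update (fun _ => b) zero a)
    dsimp only
    rw [hi, update_apply]
    split_ifs <;> simp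
  · refine hm _ _ fun i => ?_
    simp only [update_apply]
    split_ifs <;> assumption
end

section
/- Let X be a linearly ordered set, n ≥ 2, and let G : X² → X be quasitrivial and nondecreasing. Then the operation F : X^n → X defined by F(x_1,...,x_n) = G(min_i x_i, max_i x_i) is associative (in the n-ary sense). -/
/-!
Write `F S = G (min S) (max S)` for a nonempty finite set `S` of values, so that the `n`-ary
operation is `F` of the set of its arguments. Since `G a b ∈ {a, b}` and `G` is monotone,
inserting `F T` into `S` does as well as inserting all of `T`: `F (insert (F T) S) = F (T ∪ S)`.
Hence both sides of each associativity equation equal `F` of the set of all `2n - 1` arguments.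
-/

open Finset

section MinMaxEval

variable {X : Type*} [LinearOrder X] {G : X → X → X}

variable (G) in
def minMaxEval (s : Finset X) (hs : s.Nonempty) : X :=
  G (s.min' hs) (s.max' hs)

theorem inf'_sup'_eq_minMaxEval {ι : Type*} (s : Finset ι) (hs : s.Nonempty)
    (f : ι → X) :
    G (s.inf' hs f) (s.sup' hs f) = minMaxEval G (s.image f) (hs.image f) := by
  rw [minMaxEval, min'_eq_inf', max'_eq_sup', inf'_image, sup'_image]
  rfl

/- Replacing `a` or `b` by `G a b` can only matter when the replaced endpoint is the overall
extremum; there, quasitriviality and monotonicity force `a = b`. -/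
theorem apply_min_apply_max_apply (hq : ∀ x y, G x y = x ∨ G x y = y)
    (hm : ∀ x x' y y', x ≤ x' → y ≤ y' → G x y ≤ G x' y') {a b : X} (hab : a ≤ b) (o O : X) :
    G (min (G a b) o) (max (G a b) O) = G (min a o) (max b O) := by
  have hidem : ∀ z, G z z = z := fun z => (hq z z).elim id id
  rcases hq a b with hGab | hGab <;> rw [hGab]
  · rcases hq (min a o) (max b O) with h | h
    · refine le_antisymm (h ▸ hm _ _ _ _ le_rfl (max_le_max hab le_rfl)) ?_
      calc G (min a o) (max b O) = G (min a o) (min a o) := by rw [h, hidem]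
        _ ≤ G (min a o) (max a O) :=
          hm _ _ _ _ le_rfl ((min_le_left a o).trans (le_max_left a O))
    · have hb : b ≤ max a O := by
        rcases le_total b O with hbO | hOb
        · exact hbO.trans (le_max_right a O)
        · calc b = G (min a o) (max b O) := by rw [h, max_eq_left hOb]
            _ ≤ G a (max b O) := hm _ _ _ _ (min_le_left a o) le_rfl
            _ = a := by rw [max_eq_left hOb, hGab]
            _ ≤ max a O := le_max_left a O
      rw [le_antisymm (max_le_max hab le_rfl) (max_le hb (le_max_right a O))]
  · rcases hq (min a o) (max b O) with h | h
    · have hba : min b o ≤ a := by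
        rcases le_total o a with hoa | hao
        · exact (min_le_right b o).trans hoa
        · calc min b o ≤ b := min_le_left b o
            _ = G a b := hGab.symm
            _ ≤ G a (max b O) := hm _ _ _ _ le_rfl (le_max_left b O)
            _ = a := by rw [← min_eq_left hao, h]
      rw [le_antisymm (le_min hba (min_le_right b o)) (min_le_min hab le_rfl)]
    · refine le_antisymm ?_ (h ▸ hm _ _ _ _ (min_le_min hab le_rfl) le_rfl)
      calc G (min b o) (max b O) ≤ G (max b O) (max b O) :=
            hm _ _ _ _ ((min_le_left b o).trans (le_max_left b O)) le_rfl
        _ = G (min a o) (max b O) := by rw [h, hidem]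

theorem minMaxEval_insert_minMaxEval (hq : ∀ x y, G x y = x ∨ G x y = y)
    (hm : ∀ x x' y y', x ≤ x' → y ≤ y' → G x y ≤ G x' y') {s t : Finset X}
    (hs : s.Nonempty) (ht : t.Nonempty) :
    minMaxEval G (insert (minMaxEval G t ht) s) (s.insert_nonempty _) =
      minMaxEval G (t ∪ s) (ht.mono subset_union_left) := by
  simp only [minMaxEval, min'_insert _ _ hs, max'_insert _ _ hs, min'_union ht hs,
    max'_union ht hs]
  exact apply_min_apply_max_apply hq hm (t.min'_le_max' ht) _ _

end MinMaxEval

section SubstAt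

variable {X : Type*}

def substAt (n : ℕ) (x : ℕ → X) (s : ℕ) (c : X) : Fin n → X :=
  fun j => if (j : ℕ) < s then x j else if (j : ℕ) = s then c else x (j + n - 1)

theorem image_substAt [DecidableEq X] {n : ℕ} (x : ℕ → X) {s : ℕ} (hs : s < n) (c : X) :
    univ.image (substAt n x s c) = insert c ((range s ∪ Ico (s + n) (2 * n - 1)).image x) := by
  ext v
  simp only [mem_image, mem_univ, true_and, mem_insert, mem_union, mem_range, mem_Ico, substAt]
  constructor
  · rintro ⟨j, rfl⟩
    split_ifs with hjs hjs'
    · exact Or.inr ⟨j, Or.inl hjs, rfl⟩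
    · exact Or.inl rfl
    · exact Or.inr ⟨j + n - 1, Or.inr ⟨by omega, by omega⟩, rfl⟩
  · rintro (rfl | ⟨m, hm | hm, rfl⟩)
    · exact ⟨⟨s, hs⟩, by simp⟩
    · exact ⟨⟨m, by omega⟩, by simp [hm]⟩
    · refine ⟨⟨m + 1 - n, by omega⟩, ?_⟩
      simp only [if_neg (show ¬ m + 1 - n < s by omega), if_neg (show m + 1 - n ≠ s by omega)]
      congr 1
      omega

theorem univ_image_add_eq_Ico_image [DecidableEq X] {n : ℕ} (x : ℕ → X) (s : ℕ) :
    univ.image (fun k : Fin n => x (s + k)) = (Ico s (s + n)).image x := by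
  ext v
  simp only [mem_image, mem_univ, true_and, mem_Ico]
  constructor
  · rintro ⟨k, rfl⟩
    exact ⟨s + k, by omega, rfl⟩
  · rintro ⟨m, hm, rfl⟩
    exact ⟨⟨m - s, by omega⟩, by simp only; congr 1; omega⟩

end SubstAt

theorem minMaxEval_substAt {X : Type*} [LinearOrder X] {G : X → X → X}
    (hq : ∀ x y, G x y = x ∨ G x y = y)
    (hm : ∀ x x' y y', x ≤ x' → y ≤ y' → G x y ≤ G x' y')
    {n : ℕ} (hn : 2 ≤ n) (hne : (univ : Finset (Fin n)).Nonempty) (x : ℕ → X) {s : ℕ}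
    (hs : s < n) :
    let F := fun y : Fin n → X => G (univ.inf' hne y) (univ.sup' hne y)
    F (substAt n x s (F fun k => x (s + k))) =
      minMaxEval G ((range (2 * n - 1)).image x) ((nonempty_range_iff.2 (by omega)).image x) := by
  have hout : (range s ∪ Ico (s + n) (2 * n - 1)).Nonempty := by
    rcases Nat.eq_zero_or_pos s with rfl | hs0
    · exact ⟨n, by simp only [mem_union, mem_range, mem_Ico]; omega⟩
    · exact ⟨0, by simp [hs0]⟩
  have hrange : range (2 * n - 1) = Ico s (s + n) ∪ (range s ∪ Ico (s + n) (2 * n - 1)) := by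
    ext m; simp only [mem_range, mem_union, mem_Ico]; omega
  simp only [inf'_sup'_eq_minMaxEval, image_substAt x hs, univ_image_add_eq_Ico_image,
    minMaxEval_insert_minMaxEval hq hm (hout.image x), ← image_union, ← hrange]

theorem stmt_7 {X : Type*} [LinearOrder X] {n : ℕ} (hn : 2 ≤ n)
    (G : X → X → X)
    (hq : ∀ x y, G x y = x ∨ G x y = y)
    (hm : ∀ x x' y y', x ≤ x' → y ≤ y' → G x y ≤ G x' y') :
    NAssoc n (fun x : Fin n → X =>
      G (Finset.univ.inf' (Finset.univ_nonempty_iff.mpr ⟨⟨0, by omega⟩⟩) x)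
        (Finset.univ.sup' (Finset.univ_nonempty_iff.mpr ⟨⟨0, by omega⟩⟩) x)) := by
  intro x i hi
  have hne : (univ : Finset (Fin n)).Nonempty := univ_nonempty_iff.mpr ⟨⟨0, by omega⟩⟩
  exact (minMaxEval_substAt hq hm hn hne x (by omega)).trans
    (minMaxEval_substAt hq hm hn hne x (by omega)).symm
end

section
/- Let F : X^n → X be associative and derived from two associative binary operations H and H'. If both H and H' are idempotent, then H = H'. -/
theorem iterComp_update_zero_const {X : Type*} {G : X → X → X}
    (hG : ∀ x y z, G (G x y) z = G x (G y z)) (hiG : ∀ x, G x x = x) (a b : X) (k : ℕ) :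
    iterComp G (Function.update (fun _ => b) 0 a) (k + 1) = G a b := by
  induction k with
  | zero => simp [iterComp]
  | succ k ih =>
    change G (iterComp G _ (k + 1)) _ = G a b
    rw [ih, Function.update_of_ne (Nat.succ_ne_zero _), hG, hiG]

theorem DerivedFrom.apply_update_zero_const {X : Type*} {n : ℕ} (hn : 2 ≤ n)
    {F : (Fin n → X) → X} {G : X → X → X} (hFG : DerivedFrom F G)
    (hG : ∀ x y z, G (G x y) z = G x (G y z)) (hiG : ∀ x, G x x = x) (a b : X) :
    F (fun i : Fin n => Function.update (fun _ => b) 0 a (i : ℕ)) = G a b := by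
  obtain ⟨k, rfl⟩ : ∃ k, n = k + 2 := ⟨n - 2, by omega⟩
  exact (hFG _).trans (iterComp_update_zero_const hG hiG a b k)

theorem stmt_9_general {X : Type*} {n : ℕ} (hn : 2 ≤ n) (F : (Fin n → X) → X)
    (H H' : X → X → X)
    (hH : ∀ x y z, H (H x y) z = H x (H y z))
    (hH' : ∀ x y z, H' (H' x y) z = H' x (H' y z))
    (hFH : DerivedFrom F H) (hFH' : DerivedFrom F H')
    (hiH : ∀ x, H x x = x) (hiH' : ∀ x, H' x x = x) :
    H = H' := by
  funext a b
  rw [← hFH.apply_update_zero_const hn hH hiH, hFH'.apply_update_zero_const hn hH' hiH']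

theorem stmt_9 {X : Type*} {n : ℕ} (hn : 2 ≤ n) (F : (Fin n → X) → X)
    (H H' : X → X → X)
    (hF : NAssoc n F)
    (hH : ∀ x y z, H (H x y) z = H x (H y z))
    (hH' : ∀ x y z, H' (H' x y) z = H' x (H' y z))
    (hFH : DerivedFrom F H) (hFH' : DerivedFrom F H')
    (hiH : ∀ x, H x x = x) (hiH' : ∀ x, H' x x = x) :
    H = H' :=
  stmt_9_general hn F H H' hH hH' hFH hFH' hiH hiH'
end

section
/- Let F : X^n → X be symmetric and associative, and suppose F is derived from a surjective associative binary operation H : X² → X. Then H is symmetric. -/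
/-! For `n = m + 2`, a symmetric `F` derived from `H` gives, via the cyclic rotation of its
arguments, `a ∘ (x₀ ∘ ⋯ ∘ xₘ) = (x₀ ∘ ⋯ ∘ xₘ) ∘ a`. Surjectivity of `H` makes every element
a product of `m + 1` factors, so `H` commutes. -/

section iterComp

variable {X : Type*} (H : X → X → X)

theorem iterComp_congr {x y : ℕ → X} {k : ℕ} (h : ∀ i ≤ k, x i = y i) :
    iterComp H x k = iterComp H y k := by
  induction k with
  | zero => exact h 0 le_rfl
  | succ k ih =>
    rw [iterComp, iterComp, ih fun i hi => h i (Nat.le_succ_of_le hi), h (k + 1) le_rfl]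

theorem iterComp_succ_eq_head (hH : ∀ x y z, H (H x y) z = H x (H y z)) (x : ℕ → X) (k : ℕ) :
    iterComp H x (k + 1) = H (x 0) (iterComp H (fun i => x (i + 1)) k) := by
  induction k with
  | zero => rfl
  | succ k ih => rw [iterComp, ih, hH]; rfl

theorem iterComp_surjective (hsurj : Function.Surjective fun p : X × X => H p.1 p.2) (k : ℕ) :
    Function.Surjective fun x => iterComp H x k := by
  induction k with
  | zero => exact fun z => ⟨fun _ => z, rfl⟩
  | succ k ih =>
    intro z
    obtain ⟨⟨a, b⟩, rfl⟩ := hsurj z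
    obtain ⟨x, rfl⟩ := ih a
    refine ⟨fun i => if i = k + 1 then b else x i, ?_⟩
    simp only [iterComp, if_pos]
    rw [iterComp_congr H fun i hi => if_neg (by omega)]

end iterComp

section DerivedFrom

variable {X : Type*} {m : ℕ} {F : (Fin (m + 2) → X) → X} {H : X → X → X}

theorem DerivedFrom.iterComp_rotate (hs : Symm F) (hFH : DerivedFrom F H) (x : ℕ → X) :
    iterComp H x (m + 1) = iterComp H (fun i => x ((i + 1) % (m + 2))) (m + 1) :=
  calc iterComp H x (m + 1) = F (fun i => x i) := (hFH x).symm
    _ = F (fun i => x ((i + 1) % (m + 2))) := by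
      rw [← hs _ (finRotate _)]
      congr 1
      funext i
      simp [Fin.val_add]
    _ = _ := hFH fun i => x ((i + 1) % (m + 2))

theorem DerivedFrom.commute_iterComp (hs : Symm F) (hFH : DerivedFrom F H)
    (hH : ∀ x y z, H (H x y) z = H x (H y z)) (a : X) (x : ℕ → X) :
    H a (iterComp H x m) = H (iterComp H x m) a := by
  let y : ℕ → X := fun | 0 => a | i + 1 => x i
  have hrot : iterComp H (fun i => y ((i + 1) % (m + 2))) m = iterComp H x m :=
    iterComp_congr H fun i hi => by rw [Nat.mod_eq_of_lt (by omega)]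
  calc H a (iterComp H x m) = iterComp H y (m + 1) := (iterComp_succ_eq_head H hH y m).symm
    _ = iterComp H (fun i => y ((i + 1) % (m + 2))) (m + 1) := hFH.iterComp_rotate hs y
    _ = H (iterComp H x m) a := by rw [iterComp, hrot, Nat.mod_self]

end DerivedFrom

theorem stmt_10_general {X : Type*} {n : ℕ} (hn : 2 ≤ n) (F : (Fin n → X) → X)
    (H : X → X → X)
    (hs : Symm F)
    (hH : ∀ x y z, H (H x y) z = H x (H y z))
    (hsurj : Function.Surjective fun p : X × X => H p.1 p.2)
    (hFH : DerivedFrom F H) :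
    ∀ x y, H x y = H y x := by
  obtain ⟨m, rfl⟩ : ∃ m, n = m + 2 := ⟨n - 2, by omega⟩
  intro a z
  obtain ⟨x, rfl⟩ := iterComp_surjective H hsurj m z
  exact hFH.commute_iterComp hs hH a x

theorem stmt_10 {X : Type*} {n : ℕ} (hn : 2 ≤ n) (F : (Fin n → X) → X)
    (H : X → X → X)
    (hs : Symm F) (hF : NAssoc n F)
    (hH : ∀ x y z, H (H x y) z = H x (H y z))
    (hsurj : Function.Surjective fun p : X × X => H p.1 p.2)
    (hFH : DerivedFrom F H) :
    ∀ x y, H x y = H y x :=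
  stmt_10_general hn F H hs hH hsurj hFH
end

section
/- An operation F : X^n → X is quasitrivial, symmetric, associative, and derived from a quasitrivial associative binary operation H : X² → X if and only if there exists a linear order ⪯ on X such that F(x_1,...,x_n) = max_⪯{x_1,...,x_n} for all x_1,...,x_n. -/
/-! Symmetry of `F` forces the quasitrivial associative operation `∘` to be commutative: the tuples
`(p, q, …, q)` and `(q, …, q, p)` evaluate to `p ∘ q` and `q ∘ p`. A commutative quasitrivial
semigroup is a chain for `a ≤ b ↔ a ∘ b = b`, with `∘ = max`, so `F` returns the greatest argument.
Conversely the maximum of a tuple depends only on its set of entries, which gives symmetry, and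
replacing a block of entries by its maximum does not change the overall maximum, which gives
associativity. -/

open Set

section

variable {X : Type*}

section Order

lemma isGreatest_range_iff [LE X] {ι : Sort*} (x : ι → X) (a : X) :
    IsGreatest (range x) a ↔ (∃ i, a = x i) ∧ ∀ i, x i ≤ a := by
  simp [IsGreatest, upperBounds, eq_comm]

lemma IsGreatest.union_of_insert [Preorder X] {s t : Set X} {a b : X} (ha : IsGreatest s a)
    (hb : IsGreatest (insert a t) b) : IsGreatest (s ∪ t) b := by
  refine ⟨?_, ?_⟩
  · rcases hb.1 with rfl | hbt
    exacts [Or.inl ha.1, Or.inr hbt]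
  · rintro c (hc | hc)
    exacts [(ha.2 hc).trans (hb.2 (mem_insert a t)), hb.2 (mem_insert_of_mem a hc)]

lemma range_fin_eq_image_Iio {n : ℕ} (x : ℕ → X) :
    range (fun i : Fin n => x i) = x '' Iio n := by
  rw [← Fin.range_val, ← range_comp]
  rfl

lemma isGreatest_image_iterComp_max [LinearOrder X] (x : ℕ → X) (k : ℕ) :
    IsGreatest (x '' Iio (k + 1)) (iterComp max x k) := by
  induction k with
  | zero => simp [iterComp]
  | succ k ih =>
    have hIio : Iio (k + 1 + 1) = insert (k + 1) (Iio (k + 1)) := by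
      ext i; simp only [mem_Iio, mem_insert_iff]; omega
    rw [hIio, image_insert_eq, iterComp, max_comm]
    exact ih.insert _

variable {n : ℕ} {F : (Fin n → X) → X}

theorem derivedFrom_max_iff [LinearOrder X] (hn : 0 < n) :
    DerivedFrom F max ↔ ∀ x, IsGreatest (range x) (F x) := by
  have hmax : ∀ x : ℕ → X, IsGreatest (x '' Iio n) (iterComp max x (n - 1)) := fun x => by
    simpa [Nat.sub_add_cancel hn] using isGreatest_image_iterComp_max x (n - 1)
  constructor
  · intro hder x
    set y : ℕ → X := fun k => x ⟨k % n, Nat.mod_lt k hn⟩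
    have hy : (fun i : Fin n => y i) = x :=
      funext fun i => congrArg x (Fin.ext (Nat.mod_eq_of_lt i.2))
    rw [← hy, hder y, range_fin_eq_image_Iio]
    exact hmax y
  · intro hF x
    have hx := hF fun i : Fin n => x i
    rw [range_fin_eq_image_Iio] at hx
    exact hx.unique (hmax x)

variable [PartialOrder X]

theorem symm_of_isGreatest (hF : ∀ x : Fin n → X, IsGreatest (range x) (F x)) : Symm F :=
  fun x σ => (hF (x ∘ σ)).unique (by rw [EquivLike.range_comp]; exact hF x)

lemma isGreatest_substitution (hF : ∀ x : Fin n → X, IsGreatest (range x) (F x)) (x : ℕ → X)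
    {m : ℕ} (hm : m < n) :
    IsGreatest (x '' Iio (2 * n - 1)) (F fun j : Fin n => if (j : ℕ) < m then x j
      else if (j : ℕ) = m then F (fun k : Fin n => x (m + k)) else x (j + n - 1)) := by
  set v := F fun k : Fin n => x (m + k)
  have hblock : IsGreatest (x '' Ico m (m + n)) v := by
    convert hF fun k : Fin n => x (m + k) using 1
    ext a
    simp only [mem_image, mem_Ico, mem_range]
    constructor
    · rintro ⟨k, hk, rfl⟩
      exact ⟨⟨k - m, by omega⟩, by simp only; congr 1; omega⟩
    · rintro ⟨k, rfl⟩
      exact ⟨m + k, by omega, rfl⟩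
  have hrest : range (fun j : Fin n => if (j : ℕ) < m then x j else if (j : ℕ) = m then v
      else x (j + n - 1)) = insert v (x '' (Iio m ∪ Ico (m + n) (2 * n - 1))) := by
    ext a
    simp only [mem_range, mem_insert_iff, mem_image, mem_union, mem_Iio, mem_Ico]
    constructor
    · rintro ⟨j, rfl⟩
      split_ifs with h₁ h₂
      exacts [Or.inr ⟨j, Or.inl h₁, rfl⟩, Or.inl rfl, Or.inr ⟨j + n - 1, Or.inr (by omega), rfl⟩]
    · rintro (rfl | ⟨k, hk | hk, rfl⟩)
      · exact ⟨⟨m, hm⟩, by simp⟩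
      · exact ⟨⟨k, by omega⟩, by simp [hk]⟩
      · refine ⟨⟨k - n + 1, by omega⟩, ?_⟩
        simp only [if_neg (show ¬(k - n + 1 < m) by omega), if_neg (show k - n + 1 ≠ m by omega)]
        congr 1; omega
  have hIio : Iio (2 * n - 1) = Ico m (m + n) ∪ (Iio m ∪ Ico (m + n) (2 * n - 1)) := by
    ext k; simp only [mem_Iio, mem_union, mem_Ico]; omega
  rw [hIio, image_union]
  exact hblock.union_of_insert (hrest ▸ hF _)

theorem nAssoc_of_isGreatest (hF : ∀ x : Fin n → X, IsGreatest (range x) (F x)) :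
    NAssoc n F := fun x i hi =>
  (isGreatest_substitution hF x (by omega)).unique (isGreatest_substitution hF x (by omega))

end Order

section Binary

variable (H : X → X → X)

lemma iterComp_succ_eq_left (hassoc : ∀ a b c, H (H a b) c = H a (H b c)) (x : ℕ → X) (k : ℕ) :
    iterComp H x (k + 1) = H (x 0) (iterComp H (fun i => x (i + 1)) k) := by
  induction k with
  | zero => rfl
  | succ k ih => rw [iterComp, ih, hassoc]; rfl

lemma iterComp_eq_of_forall_le (hidem : ∀ a, H a a = a) {x : ℕ → X} {k : ℕ} {c : X}
    (hx : ∀ i ≤ k, x i = c) : iterComp H x k = c := by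
  induction k with
  | zero => exact hx 0 le_rfl
  | succ k ih => rw [iterComp, ih fun i hi => hx i (by omega), hx _ le_rfl, hidem]

theorem comm_of_symm_derivedFrom {n : ℕ} (hn : 2 ≤ n) {F : (Fin n → X) → X} (hsymm : Symm F)
    (hder : DerivedFrom F H) (hidem : ∀ a, H a a = a)
    (hassoc : ∀ a b c, H (H a b) c = H a (H b c)) (p q : X) : H p q = H q p := by
  obtain ⟨m, hm⟩ : ∃ m, n - 1 = m + 1 := ⟨n - 2, by omega⟩
  set a : ℕ → X := fun k => if k = 0 then p else q
  set b : ℕ → X := fun k => if k = n - 1 then p else q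
  have ha : F (fun i : Fin n => a i) = H p q := by
    rw [hder, hm, iterComp_succ_eq_left H hassoc,
      iterComp_eq_of_forall_le H hidem fun i _ => if_neg i.succ_ne_zero]
    rfl
  have hb : F (fun i : Fin n => b i) = H q p := by
    rw [hder, hm, iterComp, iterComp_eq_of_forall_le H hidem fun i _ => if_neg (by omega)]
    simp only [b, if_pos hm.symm]
  have hswap : (fun i : Fin n => a i) ∘ Equiv.swap ⟨0, by omega⟩ ⟨n - 1, by omega⟩ =
      fun i : Fin n => b i := by
    funext j
    simp only [Function.comp_apply, Equiv.swap_apply_def, a, b]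
    split_ifs <;> simp_all [Fin.ext_iff]
  rw [← ha, ← hb, ← hswap, hsymm]

noncomputable abbrev linearOrderOfQuasitrivial (hq : ∀ a b, H a b = a ∨ H a b = b)
    (hassoc : ∀ a b c, H (H a b) c = H a (H b c)) (hcomm : ∀ a b, H a b = H b a) :
    LinearOrder X where
  le a b := H a b = b
  le_refl a := (hq a a).elim id id
  le_trans a b c (hab : H a b = b) (hbc : H b c = c) := by
    rw [← hbc, ← hassoc, hab]
  le_antisymm a b (hab : H a b = b) (hba : H b a = a) := by rw [← hba, hcomm, hab]
  le_total a b := (hq a b).symm.imp id fun h => (hcomm b a).trans h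
  toDecidableLE := Classical.decRel _
  max := H
  max_def a b := by
    split_ifs with h
    exacts [h, (hq a b).resolve_right h]

end Binary

end

theorem stmt_11 {X : Type*} {n : ℕ} (hn : 2 ≤ n) (F : (Fin n → X) → X) :
    (Quasitrivial F ∧ Symm F ∧ NAssoc n F ∧
      ∃ H : X → X → X, (∀ x y, H x y = x ∨ H x y = y) ∧
        (∀ x y z, H (H x y) z = H x (H y z)) ∧ DerivedFrom F H) ↔
    ∃ r : X → X → Prop, IsLinearOrder X r ∧
      ∀ x : Fin n → X, (∃ i, F x = x i) ∧ ∀ i, r (x i) (F x) := by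
  constructor
  · rintro ⟨-, hsymm, -, H, hq, hassoc, hder⟩
    have hidem (a : X) : H a a = a := (hq a a).elim id id
    let := linearOrderOfQuasitrivial H hq hassoc
      (comm_of_symm_derivedFrom H hn hsymm hder hidem hassoc)
    have hF := (derivedFrom_max_iff (by omega)).1 hder
    exact ⟨(· ≤ ·), inferInstance, fun x => (isGreatest_range_iff x (F x)).1 (hF x)⟩
  · rintro ⟨r, hr, hrF⟩
    let : LinearOrder X :=
      { le := r
        le_refl := hr.refl
        le_trans := hr.trans
        le_antisymm := hr.antisymm
        le_total := hr.total
        toDecidableLE := Classical.decRel r }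
    have hF (x : Fin n → X) : IsGreatest (range x) (F x) :=
      (isGreatest_range_iff x (F x)).2 (hrF x)
    exact ⟨fun x => (hrF x).1, symm_of_isGreatest hF, nAssoc_of_isGreatest hF, max,
      max_choice, max_assoc, (derivedFrom_max_iff (by omega)).2 hF⟩
end

section
/- Let (X,≤) be a linearly ordered set and ⪯ another linear order on X, and let F : X^n → X be defined by F(x_1,...,x_n) = max_⪯{x_1,...,x_n}. Then F is nondecreasing with respect to ≤ (in each argument) if and only if ⪯ is single-peaked with respect to ≤. -/
/-!
The `r`-lower sets `{b | r b w}` of a single-peaked order are order-convex. If `F x = x i`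
exceeded `F y = y j` although `x ≤ y`, then `x i` lies between `y j` and `y i`, both `r`-below
`y j`, so `r (x i) (y j)`; and `y j` lies between `x j` and `x i`, both `r`-below `x i`, so
`r (y j) (x i)`, forcing `x i = y j`. Conversely, a peak `a < b < c` with `b` the `r`-largest
breaks monotonicity on a tuple taking only two of the values `a, b, c`.
-/

def IsMaxSelection {X : Type*} {n : ℕ} (r : X → X → Prop) (F : (Fin n → X) → X) : Prop :=
  ∀ x : Fin n → X, (∃ i, F x = x i) ∧ ∀ i, r (x i) (F x)

def SinglePeaked {X : Type*} [LinearOrder X] (r : X → X → Prop) : Prop :=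
  ∀ a b c : X, a < b → b < c → (r b a ∧ b ≠ a) ∨ (r b c ∧ b ≠ c)

section

variable {X : Type*} {r : X → X → Prop}

theorem SinglePeaked.rel_of_le_of_le [LinearOrder X] [IsTrans X r] (h : SinglePeaked r)
    {a b c w : X} (hab : a ≤ b) (hbc : b ≤ c) (ha : r a w) (hc : r c w) : r b w := by
  rcases hab.eq_or_lt with rfl | hab
  · exact ha
  rcases hbc.eq_or_lt with rfl | hbc
  · exact hc
  rcases h a b c hab hbc with ⟨hba, -⟩ | ⟨hbc, -⟩
  · exact _root_.trans hba ha
  · exact _root_.trans hbc hc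

namespace IsMaxSelection

variable {n : ℕ} {F : (Fin n → X) → X}

theorem apply_eq_of_rel [Std.Antisymm r] (hF : IsMaxSelection r F) {x : Fin n → X} {w : X}
    (hw : ∀ k, r (x k) w) (i : Fin n) (hi : x i = w) : F x = w := by
  obtain ⟨j, hj⟩ := (hF x).1
  exact antisymm (hj ▸ hw j) (hi ▸ (hF x).2 i)

theorem apply_update_const_of_rel [Std.Antisymm r] [Std.Refl r] (hF : IsMaxSelection r F)
    {i j : Fin n} (hij : j ≠ i) {u v : X} (huv : r u v) :
    F (Function.update (fun _ => v) i u) = v := by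
  refine hF.apply_eq_of_rel (fun k => ?_) j (by simp [hij])
  rcases eq_or_ne k i with rfl | hk
  · simpa using huv
  · simpa [hk] using refl v

theorem apply_update_const_of_rel' [Std.Antisymm r] [Std.Refl r] (hF : IsMaxSelection r F)
    (i : Fin n) {u v : X} (hvu : r v u) :
    F (Function.update (fun _ => v) i u) = u := by
  refine hF.apply_eq_of_rel (fun k => ?_) i (by simp)
  rcases eq_or_ne k i with rfl | hk
  · simpa using refl u
  · simpa [hk] using hvu

variable [LinearOrder X]

theorem nondecr [IsPartialOrder X r] (hF : IsMaxSelection r F) (h : SinglePeaked r) :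
    Nondecr F := by
  intro x y hxy
  obtain ⟨i, hi⟩ := (hF x).1
  obtain ⟨j, hj⟩ := (hF y).1
  by_contra! hlt
  rw [hi, hj] at hlt
  have h₁ : r (x i) (y j) :=
    h.rel_of_le_of_le hlt.le (hxy i) (refl _) (hj ▸ (hF y).2 i)
  have h₂ : r (y j) (x i) :=
    h.rel_of_le_of_le (hxy j) hlt.le (hi ▸ (hF x).2 j) (refl _)
  exact hlt.ne' (antisymm h₁ h₂)

theorem singlePeaked [IsLinearOrder X r] (hn : 2 ≤ n) (hF : IsMaxSelection r F)
    (hmono : Nondecr F) : SinglePeaked r := by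
  intro a b c hab hbc
  by_contra! hpeak
  have hrab : r a b := (total_of r a b).resolve_right fun h => hab.ne' (hpeak.1 h)
  have hrcb : r c b := (total_of r c b).resolve_right fun h => hbc.ne (hpeak.2 h)
  let i₀ : Fin n := ⟨0, by omega⟩
  have hi₁ : (⟨1, by omega⟩ : Fin n) ≠ i₀ := by simp [i₀, Fin.ext_iff]
  rcases total_of r a c with hrac | hrca
  · have := hmono (Function.update (fun _ => a) i₀ c) (Function.update (fun _ => b) i₀ c)
      (update_le_update_iff.2 ⟨le_rfl, fun _ _ => hab.le⟩)
    rw [hF.apply_update_const_of_rel' i₀ hrac, hF.apply_update_const_of_rel hi₁ hrcb] at this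
    exact this.not_gt hbc
  · have := hmono (Function.update (fun _ => b) i₀ a) (Function.update (fun _ => c) i₀ a)
      (update_le_update_iff.2 ⟨le_rfl, fun _ _ => hbc.le⟩)
    rw [hF.apply_update_const_of_rel hi₁ hrab, hF.apply_update_const_of_rel' i₀ hrca] at this
    exact this.not_gt hab

end IsMaxSelection

end

theorem stmt_12 {X : Type*} [LinearOrder X] {n : ℕ} (hn : 2 ≤ n)
    (r : X → X → Prop) (hr : IsLinearOrder X r)
    (F : (Fin n → X) → X)
    (hF : ∀ x : Fin n → X, (∃ i, F x = x i) ∧ ∀ i, r (x i) (F x)) :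
    (∀ x y : Fin n → X, (∀ i, x i ≤ y i) → F x ≤ F y) ↔
    (∀ a b c : X, a < b → b < c → (r b a ∧ b ≠ a) ∨ (r b c ∧ b ≠ c)) :=
  have := hr
  ⟨IsMaxSelection.singlePeaked hn hF, IsMaxSelection.nondecr hF⟩
end

section
/- If F : X^n → X is ultrabisymmetric, then F is bisymmetric. Conversely, if F is symmetric and bisymmetric, then F is ultrabisymmetric. -/
/-! Let `G(M) = F (F ∘ rows of M)`. The permutations of the `n²` entries of a matrix that leave
`G` invariant form a subgroup of `Perm (Fin n × Fin n)`. Bisymmetry says that the transposition of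
matrices lies in it, ultrabisymmetry that every swap of two entries does, i.e. that it is the whole
symmetric group; so ultrabisymmetry implies bisymmetry. Conversely, symmetry of `F` puts the swaps
within a row into the subgroup, conjugating them by the transposition gives the swaps within a
column, and any other swap is a column swap conjugated by a row swap. -/

open Equiv

section MatrixSymmetries

variable {X : Type*} {n : ℕ}

def matrixValue (F : (Fin n → X) → X) (A : Fin n × Fin n → X) : X :=
  F fun i => F fun j => A (i, j)

def matrixSymmetries (F : (Fin n → X) → X) : Subgroup (Perm (Fin n × Fin n)) where
  carrier := {σ | ∀ A, matrixValue F (A ∘ σ) = matrixValue F A}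
  one_mem' _ := rfl
  mul_mem' {σ τ} hσ hτ A := (hτ (A ∘ σ)).trans (hσ A)
  inv_mem' {σ} hσ A := by
    simpa [Function.comp_assoc] using (hσ (A ∘ ⇑σ⁻¹)).symm

variable {F : (Fin n → X) → X}

theorem bisymm_iff_prodComm_mem :
    Bisymm F ↔ (prodComm (Fin n) (Fin n) : Perm (Fin n × Fin n)) ∈ matrixSymmetries F :=
  ⟨fun hb A => (hb fun i j => A (i, j)).symm, fun h M => (h (Function.uncurry M)).symm⟩

theorem ultraBisymm_iff_swap_mem :
    UltraBisymm F ↔ ∀ p q : Fin n × Fin n, swap p q ∈ matrixSymmetries F := by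
  have swap_entries (A : Fin n × Fin n → X) (p q : Fin n × Fin n) :
      A ∘ swap p q = fun z => if z = p then A q else if z = q then A p else A z := by
    funext z
    simp only [Function.comp_apply, swap_apply_def, apply_ite A]
  refine ⟨fun hu p q A => ?_, fun h M p q => ?_⟩
  · rw [swap_entries]
    exact (hu (fun i j => A (i, j)) p q).symm
  · have := h p q (Function.uncurry M)
    rw [swap_entries] at this
    exact this.symm

theorem matrixSymmetries_eq_top_of_swap_mem
    (h : ∀ p q : Fin n × Fin n, swap p q ∈ matrixSymmetries F) :
    matrixSymmetries F = ⊤ := by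
  rw [eq_top_iff, ← Perm.closure_isSwap, Subgroup.closure_le]
  rintro _ ⟨p, q, -, rfl⟩
  exact h p q

theorem row_swap_mem_of_symm (hs : Symm F) (i j l : Fin n) :
    swap (i, j) (i, l) ∈ matrixSymmetries F := by
  intro A
  refine congrArg F (funext fun r => ?_)
  by_cases hr : r = i
  · subst hr
    have hrow :
        (fun c => (A ∘ swap (r, j) (r, l)) (r, c)) = (fun c => A (r, c)) ∘ swap j l := by
      change A ∘ (swap (r, j) (r, l) ∘ Prod.mk r) = _
      rw [(Prod.mk_right_injective r).swap_comp]
      rfl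
    rw [hrow, hs]
  · have hfix (c : Fin n) : swap (i, j) (i, l) (r, c) = (r, c) :=
      swap_apply_of_ne_of_ne (by simp [hr]) (by simp [hr])
    simp only [Function.comp_apply, hfix]

theorem column_swap_mem_of_symm_of_bisymm (hs : Symm F) (hb : Bisymm F) (i j k : Fin n) :
    swap (i, j) (k, j) ∈ matrixSymmetries F := by
  have htranspose := bisymm_iff_prodComm_mem.mp hb
  have hconj := swap_apply_apply (prodComm (Fin n) (Fin n)) (j, i) (j, k)
  simp only [coe_prodComm, Prod.swap_prod_mk] at hconj
  rw [hconj]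
  exact mul_mem (mul_mem htranspose (row_swap_mem_of_symm hs j i k)) (inv_mem htranspose)

theorem swap_mem_of_symm_of_bisymm (hs : Symm F) (hb : Bisymm F) (i j k l : Fin n) :
    swap (i, j) (k, l) ∈ matrixSymmetries F := by
  rcases eq_or_ne i k with rfl | hik
  · exact row_swap_mem_of_symm hs i j l
  rw [← swap_mul_swap_mul_swap (x := (k, l)) (y := (i, l)) (by simp [hik.symm])
    (by simp [hik.symm])]
  have hrow := row_swap_mem_of_symm hs i l j
  exact mul_mem (mul_mem hrow (column_swap_mem_of_symm_of_bisymm hs hb k l i)) hrow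

end MatrixSymmetries

theorem stmt_15_general {X : Type*} {n : ℕ} (F : (Fin n → X) → X) :
    (UltraBisymm F → Bisymm F) ∧ (Symm F → Bisymm F → UltraBisymm F) := by
  constructor
  · intro hu
    rw [bisymm_iff_prodComm_mem,
      matrixSymmetries_eq_top_of_swap_mem (ultraBisymm_iff_swap_mem.mp hu)]
    exact Subgroup.mem_top _
  · intro hs hb
    exact ultraBisymm_iff_swap_mem.mpr fun (i, j) (k, l) ↦
      swap_mem_of_symm_of_bisymm hs hb i j k l

theorem stmt_15 {X : Type*} {n : ℕ} (hn : 2 ≤ n) (F : (Fin n → X) → X) :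
    (UltraBisymm F → Bisymm F) ∧ (Symm F → Bisymm F → UltraBisymm F) :=
  stmt_15_general F
end

section
/- If F : X^n → X is surjective and ultrabisymmetric, then F is symmetric. -/
/-!
Exchanging rows `a` and `b` of a matrix one column at a time shows that `F (F ∘ rows)` is
invariant under row swaps. By surjectivity every tuple `x` is `F ∘ rows` of some matrix,
so `F` is invariant under transpositions, which generate all permutations.
-/

namespace UltraBisymm

variable {X : Type*} {n : ℕ} {F : (Fin n → X) → X}

theorem eq_swap_rows_on_columns (hu : UltraBisymm F) (M : Fin n → Fin n → X) (a b : Fin n)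
    (S : Finset (Fin n)) :
    F (fun i => F (M i)) =
      F (fun i => F (fun j => if j ∈ S then M (Equiv.swap a b i) j else M i j)) := by
  induction S using Finset.induction_on with
  | empty => simp
  | insert c S hc ih =>
    rw [ih, hu _ (a, c) (b, c)]
    congr 1; funext i; congr 1; funext j
    by_cases hj : j = c
    · subst hj
      by_cases ha : i = a
      · simp [ha, hc]
      by_cases hb : i = b
      · subst hb
        simp [ha, hc]
      simp [ha, hb, Equiv.swap_apply_of_ne_of_ne ha hb]
    · simp [hj]

theorem comp_swap_rows (hu : UltraBisymm F) (M : Fin n → Fin n → X) (a b : Fin n) :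
    F (fun i => F (M (Equiv.swap a b i))) = F (fun i => F (M i)) := by
  simpa using (hu.eq_swap_rows_on_columns M a b Finset.univ).symm

theorem comp_swap (hu : UltraBisymm F) (hsurj : Function.Surjective F) (x : Fin n → X)
    (a b : Fin n) : F (x ∘ Equiv.swap a b) = F x := by
  obtain ⟨M, rfl⟩ := hsurj.comp_left x
  exact hu.comp_swap_rows M a b

end UltraBisymm

theorem symm_of_comp_swap {X : Type*} {n : ℕ} {F : (Fin n → X) → X}
    (h : ∀ (x : Fin n → X) (a b : Fin n), F (x ∘ Equiv.swap a b) = F x) : Symm F := by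
  intro x σ
  induction σ using Equiv.Perm.swap_induction_on generalizing x with
  | one => rfl
  | swap_mul f a b _ ih =>
    rw [Equiv.Perm.coe_mul, ← Function.comp_assoc, ih, h]

theorem stmt_16_general {X : Type*} {n : ℕ} (F : (Fin n → X) → X)
    (hsurj : Function.Surjective F) (hu : UltraBisymm F) : Symm F :=
  symm_of_comp_swap (hu.comp_swap hsurj)

theorem stmt_16 {X : Type*} {n : ℕ} (hn : 2 ≤ n) (F : (Fin n → X) → X)
    (hsurj : Function.Surjective F) (hu : UltraBisymm F) : Symm F :=
  stmt_16_general F hsurj hu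
end

section
/- If F : X^n → X is bisymmetric and has a neutral element, then F is associative and symmetric. -/
/-!
Everything comes from one instance of bisymmetry. In the matrix whose row `p` is `u`, whose
column `r` is `v` off row `p`, and whose remaining entries are the neutral element `e`, the rows
evaluate to `v` with `v p := F u` and the columns to `u` with `u r := F v`, provided `u r = v p`.
A permutation matrix with entries `x` gives symmetry. For associativity, both sides of `NAssoc`
have the same outer tuple `C = (x₀, …, xᵢ, x_{i+n}, …, x_{2n-2})` once the inner block is filled
by its first (resp. last) entry, so the identity turns them into
`F (F C, x_{i+1}, …, x_{i+n-1})` and `F (x_{i+1}, …, x_{i+n-1}, F C)`, equal by symmetry.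
-/

section

open Function

variable {X : Type*} {n : ℕ} {F : (Fin n → X) → X} {e : X}

theorem Neutral.apply_ite (he : Neutral F e) (i : Fin n) (a : X) :
    F (fun j => if j = i then a else e) = a := by
  convert he i a using 2
  funext j
  simp [update_apply]

theorem Bisymm.symm_of_neutral (hb : Bisymm F) (he : Neutral F e) : Symm F := by
  intro x σ
  have hrows : ∀ i, F (fun j => if j = σ i then x (σ i) else e) = x (σ i) :=
    fun i => he.apply_ite (σ i) _
  have hcols : ∀ j, F (fun i => if j = σ i then x (σ i) else e) = x j := by
    intro j
    have hcol : (fun i => if j = σ i then x (σ i) else e) =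
        fun i => if i = σ.symm j then x j else e := by
      funext i
      by_cases h : j = σ i <;> simp [h, Equiv.eq_symm_apply, eq_comm]
    rw [hcol, he.apply_ite]
  simpa only [hrows, hcols, comp_def] using hb fun i j => if j = σ i then x (σ i) else e

theorem Bisymm.apply_update_apply_comm (hb : Bisymm F) (he : Neutral F e) {u v : Fin n → X}
    {p r : Fin n} (h : u r = v p) : F (update v p (F u)) = F (update u r (F v)) := by
  have hrows : (fun i => F fun j => if i = p then u j else if j = r then v i else e) =
      update v p (F u) := by
    funext i
    by_cases hi : i = p
    · simp [hi]
    · simp [hi, he.apply_ite]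
  have hcols : (fun j => F fun i => if i = p then u j else if j = r then v i else e) =
      update u r (F v) := by
    funext j
    by_cases hj : j = r
    · subst hj
      rw [update_self]
      congr 1
      funext i
      by_cases hi : i = p <;> simp [hi, h]
    · simp [hj, he.apply_ite]
  rw [← hrows, ← hcols]
  exact hb _

theorem Symm.apply_snoc_eq_apply_cons {m : ℕ} {F : (Fin (m + 1) → X) → X} (hs : Symm F)
    (v : Fin m → X) (a : X) : F (Fin.snoc v a) = F (Fin.cons a v) := by
  rw [Fin.snoc_eq_cons_rotate]
  exact hs _ _

theorem Bisymm.nAssoc (hb : Bisymm F) (he : Neutral F e) : NAssoc n F := by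
  intro x i hi
  obtain ⟨m, rfl⟩ : ∃ m, n = m + 1 := ⟨n - 1, by omega⟩
  set C : Fin (m + 1) → X := fun j => if (j : ℕ) ≤ i then x j else x (j + m)
  set w : Fin m → X := fun k => x (i + 1 + k)
  have hL : (fun j : Fin (m + 1) => if (j : ℕ) < i then x j
      else if (j : ℕ) = i then F (fun k : Fin (m + 1) => x (i + k)) else x (j + (m + 1) - 1)) =
      update C ⟨i, by omega⟩ (F (Fin.cons (x i) w)) := by
    have hB : (fun k : Fin (m + 1) => x (i + k)) = Fin.cons (x i) w := by
      funext k
      cases k using Fin.cases <;> simp [w, add_assoc, add_comm 1]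
    funext j
    simp only [hB, update_apply, Fin.ext_iff, C]
    split_ifs <;> first | rfl | omega
  have hR : (fun j : Fin (m + 1) => if (j : ℕ) < i + 1 then x j
      else if (j : ℕ) = i + 1 then F (fun k : Fin (m + 1) => x (i + 1 + k))
      else x (j + (m + 1) - 1)) =
      update C ⟨i + 1, by omega⟩ (F (Fin.snoc w (x (i + 1 + m)))) := by
    have hB : (fun k : Fin (m + 1) => x (i + 1 + k)) = Fin.snoc w (x (i + 1 + m)) := by
      funext k
      cases k using Fin.lastCases <;> simp [w]
    funext j
    simp only [hB, update_apply, Fin.ext_iff, C]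
    split_ifs <;> first | rfl | omega
  rw [hL, hR, hb.apply_update_apply_comm he (u := Fin.cons _ w) (r := 0) (by simp [C]),
    hb.apply_update_apply_comm he (u := Fin.snoc w _) (r := Fin.last m) (by simp [C]),
    Fin.update_cons_zero, Fin.update_snoc_last]
  exact ((hb.symm_of_neutral he).apply_snoc_eq_apply_cons _ _).symm

end

theorem stmt_19_general {X : Type*} {n : ℕ} (F : (Fin n → X) → X)
    (hb : Bisymm F) (e : X) (he : Neutral F e) :
    NAssoc n F ∧ Symm F :=
  ⟨hb.nAssoc he, hb.symm_of_neutral he⟩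

theorem stmt_19 {X : Type*} {n : ℕ} (hn : 2 ≤ n) (F : (Fin n → X) → X)
    (hb : Bisymm F) (e : X) (he : Neutral F e) :
    NAssoc n F ∧ Symm F :=
  stmt_19_general F hb e he
end
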